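/- Suppose n is odd and let C ∈ Sₙ be the long cycle sending j to j+1 for j = 1,…,n−1 and n to 1. Then for σ, τ ∈ Sₙ one has ν₂^{(σ,τ)} = ν₂ (as polynomials in R) if and only if there exists an integer k with 0 ≤ k ≤ n−1 such that σ = C^k and τ = C^k. -/

import Mathlib

open MvPolynomial Finset

noncomputable section

def Zv (n : ℕ) (j : Fin n) : MvPolynomial (Fin n ⊕ Fin n) ℂ := X (Sum.inl j)

def Wv (n : ℕ) (j : Fin n) : MvPolynomial (Fin n ⊕ Fin n) ℂ := X (Sum.inr j)

/-- The second normalized harmonic moment `ν₂`. -/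
def nu2 (n : ℕ) [NeZero n] : MvPolynomial (Fin n ⊕ Fin n) ℂ :=
  C (Complex.I / 4) *
    ∑ j : Fin n, (Wv n j - Wv n (j + 1)) * (Zv n j + Zv n (j + 1))

/-- `ν₂^{(σ,τ)}`: the polynomial obtained from `ν₂` by the substitution
`z_j ↦ z_{σ(j)}`, `w_j ↦ w_{τ(j)}`. -/
def nu2Perm (n : ℕ) [NeZero n] (σ τ : Equiv.Perm (Fin n)) : MvPolynomial (Fin n ⊕ Fin n) ℂ :=
  MvPolynomial.rename (Sum.map ⇑σ ⇑τ) (nu2 n)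

section aux
variable {n : ℕ} [NeZero n]
open Fin.CommRing

lemma myDeltaSum (a : Fin n) (h : Fin n → ℂ) :
    ∑ j : Fin n, (if j = a then (1:ℂ) else 0) * h j = h a := by
  simp only [ite_mul, one_mul, zero_mul]
  rw [Finset.sum_ite_eq' Finset.univ a h]
  simp

lemma myDeltaSum' (a : Fin n) (h : Fin n → ℂ) :
    ∑ j : Fin n, (if j + 1 = a then (1:ℂ) else 0) * h j = h (a - 1) := by
  have : ∀ j : Fin n, (j + 1 = a) = (j = a - 1) := fun j => propext (by
    constructor <;> intro hh <;> [skip; skip] <;> first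
      | (exact eq_sub_of_add_eq hh)
      | (rw [hh]; ring))
  simp only [this]
  exact myDeltaSum _ _

def myPt (a b : Fin n) : (Fin n ⊕ Fin n) → ℂ :=
  Sum.elim (fun j => if j = b then 1 else 0) (fun j => if j = a then 1 else 0)

lemma myEvalNu2 (a b : Fin n) :
    eval (myPt a b) (nu2 n) =
      (Complex.I / 4) * ((if a + 1 = b then (1:ℂ) else 0) - (if a - 1 = b then 1 else 0)) := by
  simp only [nu2, Zv, Wv, map_mul, map_sum, map_sub, map_add, eval_C, eval_X, myPt,
    Sum.elim_inl, Sum.elim_inr]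
  congr 1
  have expand : ∀ j : Fin n,
      ((if j = a then (1:ℂ) else 0) - (if j + 1 = a then 1 else 0)) *
        ((if j = b then (1:ℂ) else 0) + (if j + 1 = b then 1 else 0)) =
      (if j = a then (1:ℂ) else 0) * (if j = b then (1:ℂ) else 0)
      + (if j = a then (1:ℂ) else 0) * (if j + 1 = b then (1:ℂ) else 0)
      - ((if j + 1 = a then (1:ℂ) else 0) * (if j = b then (1:ℂ) else 0)
      + (if j + 1 = a then (1:ℂ) else 0) * (if j + 1 = b then (1:ℂ) else 0)) := fun j => by ring
  simp only [expand]
  rw [Finset.sum_sub_distrib, Finset.sum_add_distrib, Finset.sum_add_distrib,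
    myDeltaSum a (fun j => if j = b then (1:ℂ) else 0),
    myDeltaSum a (fun j => if j + 1 = b then (1:ℂ) else 0),
    myDeltaSum' a (fun j => if j = b then (1:ℂ) else 0),
    myDeltaSum' a (fun j => if j + 1 = b then (1:ℂ) else 0)]
  have h1 : a - 1 + 1 = a := by ring
  rw [h1]
  ring

lemma myAddLeftPow (k : ℕ) :
    (Equiv.addLeft (1 : Fin n)) ^ k = Equiv.addLeft ((k : ℕ) : Fin n) := by
  induction k with
  | zero => ext x; simp
  | succ k ih =>
    rw [pow_succ, ih]
    ext x
    simp only [Equiv.Perm.mul_apply, Equiv.coe_addLeft]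
    push_cast
    ring

lemma myShift (hodd : Odd n) (g : Fin n → Fin n) (hg : ∀ a, g (a + 2) = g a + 2) :
    ∀ x, g x = g 0 + x := by
  have key : ∀ k : ℕ, g ((2 * k : ℕ) : Fin n) = g 0 + ((2 * k : ℕ) : Fin n) := by
    intro k; induction k with
    | zero => simp
    | succ k ih =>
      have h1 : ((2 * (k+1) : ℕ) : Fin n) = ((2 * k : ℕ) : Fin n) + 2 := by push_cast; ring
      rw [h1, hg, ih, add_assoc]
  intro x
  obtain ⟨m, hm⟩ := hodd
  have hx : ((2 * ((m + 1) * x.val) : ℕ) : Fin n) = x := by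
    have h1 : (2 * ((m+1) * x.val)) = (n + 1) * x.val := by subst hm; ring
    rw [h1]
    push_cast
    simp [Fin.natCast_self, Fin.cast_val_eq_self]
  rw [← hx, key]

end aux


/-- For odd `n`, the stabilizer of `ν₂` in `Sₙ × Sₙ` is the diagonal cyclic group
generated by `(C, C)`, where `C : j ↦ j + 1` is the long cycle. -/
theorem statement11 (n : ℕ) [NeZero n] (hn : 3 ≤ n) (hodd : Odd n)
    (σ τ : Equiv.Perm (Fin n)) :
    nu2Perm n σ τ = nu2 n ↔
      ∃ k : ℕ, k ≤ n - 1 ∧ σ = (Equiv.addLeft (1 : Fin n)) ^ k ∧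
        τ = (Equiv.addLeft (1 : Fin n)) ^ k := by
  open Fin.CommRing in
  have two_ne : (2 : Fin n) ≠ 0 := by
    have h2 : ¬ (n ∣ 2) := fun h => by have := Nat.le_of_dvd (by norm_num) h; omega
    have : ((2:ℕ) : Fin n) ≠ 0 := by rw [Ne, Fin.natCast_eq_zero]; exact h2
    simpa using this
  constructor
  open Fin.CommRing in
  · intro h
    have key : ∀ a b : Fin n,
        ((if τ.symm a + 1 = σ.symm b then (1:ℂ) else 0)
          - (if τ.symm a - 1 = σ.symm b then 1 else 0))
        = ((if a + 1 = b then (1:ℂ) else 0) - (if a - 1 = b then 1 else 0)) := by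
      intro a b
      have he := congrArg (eval (myPt a b)) h
      rw [nu2Perm, eval_rename] at he
      have hpt : (myPt a b) ∘ Sum.map ⇑σ ⇑τ = myPt (τ.symm a) (σ.symm b) := by
        funext s
        cases s with
        | inl j => simp [myPt, Equiv.apply_eq_iff_eq_symm_apply]
        | inr j => simp [myPt, Equiv.apply_eq_iff_eq_symm_apply]
      rw [hpt, myEvalNu2, myEvalNu2] at he
      have hI : (Complex.I / 4) ≠ 0 := by
        simp [Complex.I_ne_zero, div_ne_zero_iff]
      exact mul_left_cancel₀ hI he
    have P1 : ∀ a : Fin n, σ.symm (a + 1) = τ.symm a + 1 := by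
      intro a
      have hne : (a : Fin n) - 1 ≠ a + 1 := fun hc => two_ne (by linear_combination -hc)
      have k1 := key a (a + 1)
      rw [if_pos rfl, if_neg hne, sub_zero] at k1
      by_cases c1 : τ.symm a + 1 = σ.symm (a + 1)
      · exact c1.symm
      · exfalso
        by_cases c2 : τ.symm a - 1 = σ.symm (a + 1) <;> norm_num [c1, c2] at k1
    have P2 : ∀ a : Fin n, σ.symm (a - 1) = τ.symm a - 1 := by
      intro a
      have hne : (a : Fin n) + 1 ≠ a - 1 := fun hc => two_ne (by linear_combination hc)
      have k1 := key a (a - 1)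
      rw [if_neg hne, if_pos rfl, zero_sub] at k1
      by_cases c2 : τ.symm a - 1 = σ.symm (a - 1)
      · exact c2.symm
      · exfalso
        by_cases c1 : τ.symm a + 1 = σ.symm (a - 1) <;> norm_num [c1, c2] at k1
    have hstep : ∀ a : Fin n, σ.symm (a + 2) = σ.symm a + 2 := by
      intro a
      have e0 : a + 1 + 1 = a + 2 := by ring
      have e2 : a + 1 - 1 = a := by ring
      have g1 := P1 (a + 1)
      have g2 := P2 (a + 1)
      rw [e0] at g1
      rw [e2] at g2
      rw [g1, g2]; ring
    set d : Fin n := σ.symm 0 with hd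
    have hσs : ∀ x, σ.symm x = d + x := myShift hodd _ hstep
    have hτs : ∀ x, τ.symm x = d + x := by
      intro x
      have hx := P1 x
      rw [hσs] at hx
      linear_combination -hx
    have hστ : σ = τ := by
      have : σ.symm = τ.symm := by
        apply Equiv.ext; intro x; rw [hσs, hτs]
      calc σ = σ.symm.symm := (Equiv.symm_symm σ).symm
        _ = τ.symm.symm := by rw [this]
        _ = τ := Equiv.symm_symm τ
    have hσ : σ = Equiv.addLeft (-d) := by
      apply Equiv.ext; intro x
      apply σ.symm.injective
      simp only [Equiv.symm_apply_apply, Equiv.coe_addLeft]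
      rw [hσs]; ring
    refine ⟨(-d).val, by have := (-d).isLt; omega, ?_, ?_⟩
    · rw [myAddLeftPow, Fin.cast_val_eq_self]; exact hσ
    · rw [myAddLeftPow, Fin.cast_val_eq_self]; rw [← hστ]; exact hσ
  open Fin.CommRing in
  · rintro ⟨k, -, rfl, rfl⟩
    rw [myAddLeftPow]
    set c : Fin n := ((k : ℕ) : Fin n) with hc
    rw [nu2Perm, nu2]
    simp only [map_mul, map_sum, map_sub, map_add, rename_X, rename_C, Zv, Wv,
      Sum.map_inl, Sum.map_inr, Equiv.coe_addLeft]
    congr 1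
    apply Fintype.sum_equiv (Equiv.addLeft c)
    intro j
    simp only [Equiv.coe_addLeft]
    rw [add_assoc]
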